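/- arXiv:2604.12499 — 2 statements merged into one kernel-verified Lean document; each statement's English description precedes it below -/
import Mathlib

section
/- Let q be a prime power, F the finite field with q² elements, and c₀, c₁ ∈ F. The polynomial X^{q+1} + c₁·X + c₀ has exactly q+1 distinct roots in F if and only if c₁ = 0, c₀ ≠ 0, and c₀^q = c₀ (i.e. c₀ lies in the subfield with q elements and is nonzero). -/
/-!
Since `x ^ q ^ 2 = x` on `F`, the Frobenius `x ↦ x ^ q` fixes `x ^ (q + 1)`. Applying it to
`x ^ (q + 1) + c₁ x + c₀ = 0` and eliminating first `x ^ (q + 1)`, then `x ^ q`, leaves a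
quadratic equation with leading coefficient `c₁`, so for `c₁ ≠ 0` there are at most two roots.
For `c₁ = 0` the roots solve `x ^ (q + 1) = -c₀`, which forces `-c₀ ∈ 𝔽_q`. Conversely, for
`b ∈ 𝔽_qˣ` the polynomial `X ^ (q + 1) - b` divides `X ^ (q ^ 2 - 1) - 1`, as
`(q + 1) (q - 1) = q ^ 2 - 1`, hence has `q + 1` distinct roots in `F`.
-/

open Polynomial Finset

namespace FiniteField

variable {F : Type*} [Field F] [Fintype F]

theorem exists_ringHom_eq_pow_of_dvd_card {q : ℕ} (hq : q ∣ Fintype.card F) :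
    ∃ φ : F →+* F, ∀ x, φ x = x ^ q := by
  obtain ⟨p, _, n, hp, hcard⟩ := FiniteField.card' F
  obtain ⟨k, -, rfl⟩ := (Nat.dvd_prime_pow hp).1 (hcard ▸ hq)
  have : Fact p.Prime := ⟨hp⟩
  exact ⟨iterateFrobenius F p k, iterateFrobenius_def p k⟩

theorem pow_pow_succ_of_card_eq_sq {q : ℕ} (hF : Fintype.card F = q ^ 2) (x : F) :
    (x ^ (q + 1)) ^ q = x ^ (q + 1) := by
  rw [← pow_mul, add_mul, one_mul, ← sq, pow_add, ← hF, pow_card, pow_succ']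

theorem card_roots_toFinset_of_dvd_X_pow_card_sub_X [DecidableEq F] {P : F[X]}
    (hP : P ∣ X ^ Fintype.card F - X) : P.roots.toFinset.card = P.natDegree := by
  have h1 : 1 < Fintype.card F := Fintype.one_lt_card
  have hQ : (X ^ Fintype.card F - X : F[X]) ≠ 0 := X_pow_card_sub_X_ne_zero F h1
  have hQsplits : Splits (X ^ Fintype.card F - X : F[X]) := by
    rw [splits_iff_card_roots, roots_X_pow_card_sub_X, X_pow_card_sub_X_natDegree_eq F h1]
    rfl
  have hnodup : P.roots.Nodup :=
    Multiset.nodup_of_le (roots.le_of_dvd hQ hP) (roots_X_pow_card_sub_X F ▸ univ.nodup)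
  rw [Multiset.toFinset_card_of_nodup hnodup, (hQsplits.of_dvd hQ hP).natDegree_eq_card_roots]

theorem card_filter_pow_eq [DecidableEq F] {n m : ℕ} (hnm : n * m = Fintype.card F - 1) {b : F}
    (hb : b ^ m = 1) : #{x | x ^ n = b} = n := by
  have h1 : 1 < Fintype.card F := Fintype.one_lt_card
  have hn : 0 < n := Nat.pos_of_ne_zero (by rintro rfl; omega)
  have hroot : X - C b ∣ X ^ m - 1 := by
    rw [dvd_iff_isRoot]
    simp [hb]
  have hdvd : X ^ n - C b ∣ X ^ Fintype.card F - X := by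
    have := map_dvd (expand F n) hroot
    simp only [map_sub, map_pow, expand_X, expand_C, map_one, ← pow_mul, hnm] at this
    refine this.trans ⟨X, ?_⟩
    rw [sub_mul, one_mul, ← pow_succ, Nat.sub_add_cancel h1.le]
  have hfilter : ({x | x ^ n = b} : Finset F) = (X ^ n - C b).roots.toFinset := by
    ext x
    simp [mem_roots (X_pow_sub_C_ne_zero hn b), sub_eq_zero]
  rw [hfilter, card_roots_toFinset_of_dvd_X_pow_card_sub_X hdvd, natDegree_X_pow_sub_C]

theorem one_lt_of_card_eq_sq {q : ℕ} (hF : Fintype.card F = q ^ 2) : 1 < q :=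
  (Nat.one_lt_pow_iff two_ne_zero).1 (hF ▸ Fintype.one_lt_card)

theorem neg_pow_of_card_eq_sq {q : ℕ} (hF : Fintype.card F = q ^ 2) (c : F) :
    (-c) ^ q = -c ^ q := by
  obtain ⟨φ, hφ⟩ := exists_ringHom_eq_pow_of_dvd_card (hF ▸ dvd_pow_self q two_ne_zero)
  rw [← hφ, map_neg, hφ]

theorem quadratic_eq_zero_of_pow_succ_add_eq_zero {q : ℕ} (hF : Fintype.card F = q ^ 2)
    {c₀ c₁ x : F} (hx : x ^ (q + 1) + c₁ * x + c₀ = 0) :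
    c₁ * x ^ 2 + (c₁ ^ (q + 1) + c₀ - c₀ ^ q) * x + c₀ * c₁ ^ q = 0 := by
  obtain ⟨φ, hφ⟩ := exists_ringHom_eq_pow_of_dvd_card (hF ▸ dvd_pow_self q two_ne_zero)
  have hxq : x ^ (q + 1) + c₁ ^ q * x ^ q + c₀ ^ q = 0 := by
    have := congrArg φ hx
    rwa [map_add, map_add, map_mul, map_zero, hφ, hφ, hφ, hφ,
      pow_pow_succ_of_card_eq_sq hF] at this
  linear_combination x * hx + c₁ ^ q * hx - x * hxq

theorem card_filter_pow_succ_add_eq_zero_le_two [DecidableEq F] {q : ℕ}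
    (hF : Fintype.card F = q ^ 2) {c₀ c₁ : F} (hc₁ : c₁ ≠ 0) :
    #{x | x ^ (q + 1) + c₁ * x + c₀ = 0} ≤ 2 := by
  rw [← natDegree_quadratic (b := c₁ ^ (q + 1) + c₀ - c₀ ^ q) (c := c₀ * c₁ ^ q) hc₁]
  refine card_le_degree_of_subset_roots fun x hx ↦ ?_
  rw [mem_roots (ne_zero_of_natDegree_gt (n := 0) (by rw [natDegree_quadratic hc₁]; omega))]
  simpa using quadratic_eq_zero_of_pow_succ_add_eq_zero hF (mem_filter.1 hx).2

theorem card_filter_pow_succ_eq [DecidableEq F] {q : ℕ} (hF : Fintype.card F = q ^ 2) {b : F}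
    (hb : b ≠ 0) (hbq : b ^ q = b) :
    #{x | x ^ (q + 1) = b} = q + 1 := by
  have hq := one_lt_of_card_eq_sq hF
  have hnm : (q + 1) * (q - 1) = Fintype.card F - 1 := by
    rw [hF, ← Nat.sq_sub_sq, one_pow]
  refine card_filter_pow_eq hnm ((mul_left_inj' hb).1 ?_)
  rw [← pow_succ, Nat.sub_add_cancel hq.le, hbq, one_mul]

end FiniteField

open FiniteField

theorem stmt_9_general (q : ℕ)
    (F : Type*) [Field F] [Fintype F] [DecidableEq F] (hF : Fintype.card F = q ^ 2)
    (c₀ c₁ : F) :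
    (Finset.univ.filter fun x : F => x ^ (q + 1) + c₁ * x + c₀ = 0).card = q + 1 ↔
      c₁ = 0 ∧ c₀ ≠ 0 ∧ c₀ ^ q = c₀ := by
  have hq := one_lt_of_card_eq_sq hF
  constructor
  · intro hcard
    obtain rfl : c₁ = 0 := by
      by_contra hc₁
      have := card_filter_pow_succ_add_eq_zero_le_two hF (c₀ := c₀) hc₁
      omega
    have hc₀ : c₀ ≠ 0 := by
      rintro rfl
      have : ({x | x ^ (q + 1) + 0 * x + 0 = 0} : Finset F) = {0} := by
        ext x
        simp
      rw [this, card_singleton] at hcard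
      omega
    obtain ⟨x, hx⟩ := card_pos.1 (by rw [hcard]; exact q.succ_pos)
    have hx : x ^ (q + 1) = -c₀ := by linear_combination (mem_filter.1 hx).2
    refine ⟨rfl, hc₀, neg_inj.1 ?_⟩
    rw [← neg_pow_of_card_eq_sq hF, ← hx, pow_pow_succ_of_card_eq_sq hF]
  · rintro ⟨rfl, hc₀, hc₀q⟩
    have hbq : (-c₀) ^ q = -c₀ := by rw [neg_pow_of_card_eq_sq hF, hc₀q]
    simpa [add_eq_zero_iff_eq_neg] using card_filter_pow_succ_eq hF (neg_ne_zero.2 hc₀) hbq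

/-- Let `q` be a prime power and `F` the field with `q²` elements,
`c₀, c₁ ∈ F`. The polynomial `X^{q+1} + c₁·X + c₀` has exactly `q + 1` distinct roots in `F`
if and only if `c₁ = 0`, `c₀ ≠ 0` and `c₀^q = c₀` (i.e. `c₀ ∈ 𝔽_q \ {0}`). -/
theorem stmt_9 (q : ℕ) (hq : IsPrimePow q)
    (F : Type*) [Field F] [Fintype F] [DecidableEq F] (hF : Fintype.card F = q ^ 2)
    (c₀ c₁ : F) :
    (Finset.univ.filter fun x : F => x ^ (q + 1) + c₁ * x + c₀ = 0).card = q + 1 ↔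
      c₁ = 0 ∧ c₀ ≠ 0 ∧ c₀ ^ q = c₀ :=
  stmt_9_general q F hF c₀ c₁
end

section
/- Suppose α₀ = 0 and γ₀ = 0, but α₁ ≠ 0 or γ₁ ≠ 0. Then the number of pairs (x₁, x₂) ∈ 𝔽_q × 𝔽_q with (x₁, x₂) ≠ (0, 0) satisfying both A(x₁, x₂) = 0 and B(x₁, x₂) = 0 is at most 6. -/
/-!
With `α₀ = γ₀ = 0` the polynomial `A` is a binary cubic form, nonzero because the
characteristic is odd (a nonsquare exists), so its zeros lie on at most three lines
through the origin. The form `X₁² − sX₂²` is anisotropic, so on each such line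
`t ↦ t • v` the polynomial `B` is `t²` times a nonzero polynomial of degree at most `2`
in `t` (its constant and leading coefficients are `α₁ N(v)` and `γ₁ N(v)²`), which
leaves at most two nonzero common zeros per line.
-/

open Polynomial Finset

section

variable {F : Type*} [Field F]

lemma two_ne_zero_of_not_isSquare [Finite F] {s : F} (hs : ¬IsSquare s) : (2 : F) ≠ 0 :=
  Ring.two_ne_zero fun h => hs (FiniteField.isSquare_of_char_two h s)

lemma sq_sub_mul_sq_ne_zero {s : F} (hs : ¬IsSquare s) {v : F × F} (hv : v ≠ 0) :
    v.1 ^ 2 - s * v.2 ^ 2 ≠ 0 := by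
  intro h
  by_cases h2 : v.2 = 0
  · exact hv (Prod.ext (by simpa [h2] using h) h2)
  · exact hs ⟨v.1 / v.2, by field_simp; linear_combination -h⟩

/-- Lines through the origin of `F × F` are indexed by `Option F`: `some m` is the line of
slope `m`, `none` the vertical line. -/
def lineIndex [DecidableEq F] (p : F × F) : Option F :=
  if p.1 = 0 then none else some (p.2 / p.1)

def lineDir : Option F → F × F
  | none => (0, 1)
  | some m => (1, m)

lemma lineDir_ne_zero (d : Option F) : lineDir d ≠ 0 := by
  cases d <;> simp [lineDir]

lemma exists_eq_smul_lineDir_lineIndex [DecidableEq F] (p : F × F) :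
    ∃ t : F, p = t • lineDir (lineIndex p) := by
  unfold lineIndex
  split_ifs with h
  · exact ⟨p.2, Prod.ext (by simp [lineDir, h]) (by simp [lineDir])⟩
  · exact ⟨p.1, Prod.ext (by simp [lineDir]) (by simp [lineDir, mul_div_cancel₀ _ h])⟩

/-- The homogenization of the cubic `P`, normalized so that it restricts to `P` on the
line `X₁ = 1`. -/
def cubicForm (P : Cubic F) (v : F × F) : F :=
  P.a * v.2 ^ 3 + P.b * v.1 * v.2 ^ 2 + P.c * v.1 ^ 2 * v.2 + P.d * v.1 ^ 3

lemma cubicForm_smul (P : Cubic F) (t : F) (v : F × F) :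
    cubicForm P (t • v) = t ^ 3 * cubicForm P v := by
  simp only [cubicForm, Prod.smul_fst, Prod.smul_snd, smul_eq_mul]
  ring

lemma cubicForm_lineDir_none (P : Cubic F) : cubicForm P (lineDir none) = P.a := by
  simp [cubicForm, lineDir]

lemma cubicForm_lineDir_some (P : Cubic F) (m : F) :
    cubicForm P (lineDir (some m)) = P.toPoly.eval m := by
  simp only [cubicForm, lineDir, Cubic.toPoly, eval_add, eval_mul, eval_C, eval_pow, eval_X]
  ring

variable [Fintype F] [DecidableEq F]

lemma card_filter_eval_eq_zero_le {p : F[X]} (hp : p ≠ 0) :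
    #{x | p.eval x = 0} ≤ p.natDegree :=
  card_le_degree_of_subset_roots fun x hx => by simpa [mem_roots hp] using hx

lemma card_filter_cubicForm_lineDir_eq_zero_le {P : Cubic F} (hP : P.toPoly ≠ 0) :
    #{d | cubicForm P (lineDir d) = 0} ≤ 3 := by
  by_cases ha : P.a = 0
  · have hsub : ({d | cubicForm P (lineDir d) = 0} : Finset (Option F)) ⊆
        insertNone {m | P.toPoly.eval m = 0} := by
      rintro (_ | m) hm
      · simp
      · simpa [cubicForm_lineDir_some] using hm
    calc _ ≤ _ := card_le_card hsub
      _ = #{m | P.toPoly.eval m = 0} + 1 := card_insertNone _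
      _ ≤ 2 + 1 := by
        grw [card_filter_eval_eq_zero_le hP, Cubic.natDegree_of_a_eq_zero ha]
  · have hsub : ({d | cubicForm P (lineDir d) = 0} : Finset (Option F)) ⊆
        ({m | P.toPoly.eval m = 0} : Finset F).map Function.Embedding.some := by
      rintro (_ | m) hm
      · simp [cubicForm_lineDir_none, ha] at hm
      · simpa [cubicForm_lineDir_some] using hm
    calc _ ≤ _ := card_le_card hsub
      _ = #{m | P.toPoly.eval m = 0} := card_map _
      _ ≤ 3 := (card_filter_eval_eq_zero_le hP).trans_eq (Cubic.natDegree_of_a_ne_zero ha)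

theorem card_common_zeros_le_six {P : Cubic F} (hP : P.toPoly ≠ 0) (B : F × F → F)
    (Q : F × F → Cubic F) (hQa : ∀ v, (Q v).a = 0) (hQ : ∀ d, (Q (lineDir d)).toPoly ≠ 0)
    (hB : ∀ t v, B (t • v) = t ^ 2 * (Q v).toPoly.eval t) :
    #{p | p ≠ 0 ∧ cubicForm P p = 0 ∧ B p = 0} ≤ 6 := by
  set S : Finset (F × F) := {p | p ≠ 0 ∧ cubicForm P p = 0 ∧ B p = 0}
  have hdir : S.image lineIndex ⊆ ({d | cubicForm P (lineDir d) = 0} : Finset (Option F)) := by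
    intro d hd
    obtain ⟨p, hp, rfl⟩ := mem_image.mp hd
    obtain ⟨hp0, hA, -⟩ := (mem_filter.mp hp).2
    obtain ⟨t, ht⟩ := exists_eq_smul_lineDir_lineIndex p
    have ht0 : t ≠ 0 := by rintro rfl; exact hp0 (by rw [ht, zero_smul])
    refine mem_filter.mpr ⟨mem_univ _, ?_⟩
    rw [ht, cubicForm_smul] at hA
    exact (mul_eq_zero.mp hA).resolve_left (pow_ne_zero 3 ht0)
  have hfib (d : Option F) : {p ∈ S | lineIndex p = d} ⊆
      ({t | (Q (lineDir d)).toPoly.eval t = 0} : Finset F).image (· • lineDir d) := by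
    intro p hp
    obtain ⟨hpS, rfl⟩ := mem_filter.mp hp
    obtain ⟨hp0, -, hBp⟩ := (mem_filter.mp hpS).2
    obtain ⟨t, ht⟩ := exists_eq_smul_lineDir_lineIndex p
    have ht0 : t ≠ 0 := by rintro rfl; exact hp0 (by rw [ht, zero_smul])
    rw [ht, hB] at hBp
    exact mem_image.mpr ⟨t, mem_filter.mpr ⟨mem_univ _,
      (mul_eq_zero.mp hBp).resolve_left (pow_ne_zero 2 ht0)⟩, ht.symm⟩
  calc #S ≤ 2 * #(S.image lineIndex) := card_le_mul_card_image S 2 fun d _ =>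
        calc _ ≤ _ := card_le_card (hfib d)
          _ ≤ _ := card_image_le
          _ ≤ _ := card_filter_eval_eq_zero_le (hQ d)
          _ ≤ 2 := Cubic.natDegree_of_a_eq_zero (hQa _)
    _ ≤ 2 * 3 := by grw [card_le_card hdir, card_filter_cubicForm_lineDir_eq_zero_le hP]

end

theorem stmt_14_general
    (F : Type*) [Field F] [Fintype F] [DecidableEq F]
    (s : F) (hs : ¬IsSquare s)
    (α₀ α₁ β₀ β₁ γ₀ γ₁ : F)
    (hα₀ : α₀ = 0) (hγ₀ : γ₀ = 0) (h : α₁ ≠ 0 ∨ γ₁ ≠ 0) :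
    (Finset.univ.filter fun p : F × F => p ≠ (0, 0) ∧
        (α₀ + β₀ * p.1 + s * β₁ * p.2 + γ₀ * (p.1 ^ 2 - s * p.2 ^ 2)) *
            (p.1 ^ 2 - s * p.2 ^ 2) + p.1 * (p.1 ^ 2 + 3 * s * p.2 ^ 2) = 0 ∧
        (α₁ + β₁ * p.1 + β₀ * p.2 + γ₁ * (p.1 ^ 2 - s * p.2 ^ 2)) *
            (p.1 ^ 2 - s * p.2 ^ 2) + p.2 * (3 * p.1 ^ 2 + s * p.2 ^ 2) = 0).card ≤ 6 := by
  subst hα₀ hγ₀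
  set N : F × F → F := fun v => v.1 ^ 2 - s * v.2 ^ 2
  have hs0 : s ≠ 0 := by rintro rfl; exact hs IsSquare.zero
  have h2 := two_ne_zero_of_not_isSquare hs
  have hP : (⟨-s ^ 2 * β₁, s * (3 - β₀), s * β₁, 1 + β₀⟩ : Cubic F).toPoly ≠ 0 := by
    by_cases hβ₀ : 1 + β₀ = 0
    · refine Cubic.ne_zero_of_b_ne_zero (mul_ne_zero hs0 ?_)
      rw [show 3 - β₀ = 2 * 2 by linear_combination -hβ₀]
      exact mul_ne_zero h2 h2
    · exact Cubic.ne_zero_of_d_ne_zero hβ₀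
  refine (card_le_card ?_).trans (card_common_zeros_le_six hP
    (fun p => (α₁ + β₁ * p.1 + β₀ * p.2 + γ₁ * N p) * N p + p.2 * (3 * p.1 ^ 2 + s * p.2 ^ 2))
    (fun v => ⟨0, γ₁ * N v ^ 2, (β₁ * v.1 + β₀ * v.2) * N v + v.2 * (3 * v.1 ^ 2 + s * v.2 ^ 2),
      α₁ * N v⟩) (fun _ => rfl) (fun d => ?_) (fun t v => ?_))
  · intro p hp
    obtain ⟨hp0, hA, hB⟩ := (mem_filter.mp hp).2
    refine mem_filter.mpr ⟨mem_univ _, hp0, ?_, hB⟩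
    simp only [cubicForm]
    linear_combination hA
  · have hN := sq_sub_mul_sq_ne_zero hs (lineDir_ne_zero d)
    rcases h with hα₁ | hγ₁
    · exact Cubic.ne_zero_of_d_ne_zero (mul_ne_zero hα₁ hN)
    · exact Cubic.ne_zero_of_b_ne_zero (mul_ne_zero hγ₁ (pow_ne_zero 2 hN))
  · simp only [Cubic.toPoly, eval_add, eval_mul, eval_C, eval_pow, eval_X, Prod.smul_fst,
      Prod.smul_snd, smul_eq_mul, N]
    ring

/-- odd characteristic: Suppose `α₀ = 0` and `γ₀ = 0`, but `α₁ ≠ 0` or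
`γ₁ ≠ 0`. Then the number of pairs `(x₁, x₂) ∈ 𝔽_q × 𝔽_q` with `(x₁, x₂) ≠ (0, 0)`
satisfying both `A(x₁, x₂) = 0` and `B(x₁, x₂) = 0` is at most `6`, where
`A = (α₀ + β₀X₁ + sβ₁X₂ + γ₀(X₁² − sX₂²))(X₁² − sX₂²) + X₁(X₁² + 3sX₂²)` and
`B = (α₁ + β₁X₁ + β₀X₂ + γ₁(X₁² − sX₂²))(X₁² − sX₂²) + X₂(3X₁² + sX₂²)`. -/
theorem stmt_14 (q : ℕ) (hq : IsPrimePow q) (hodd : Odd q)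
    (F : Type*) [Field F] [Fintype F] [DecidableEq F] (hF : Fintype.card F = q)
    (s : F) (hs : ¬IsSquare s)
    (α₀ α₁ β₀ β₁ γ₀ γ₁ : F)
    (hα₀ : α₀ = 0) (hγ₀ : γ₀ = 0) (h : α₁ ≠ 0 ∨ γ₁ ≠ 0) :
    (Finset.univ.filter fun p : F × F => p ≠ (0, 0) ∧
        (α₀ + β₀ * p.1 + s * β₁ * p.2 + γ₀ * (p.1 ^ 2 - s * p.2 ^ 2)) *
            (p.1 ^ 2 - s * p.2 ^ 2) + p.1 * (p.1 ^ 2 + 3 * s * p.2 ^ 2) = 0 ∧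
        (α₁ + β₁ * p.1 + β₀ * p.2 + γ₁ * (p.1 ^ 2 - s * p.2 ^ 2)) *
            (p.1 ^ 2 - s * p.2 ^ 2) + p.2 * (3 * p.1 ^ 2 + s * p.2 ^ 2) = 0).card ≤ 6 :=
  stmt_14_general F s hs α₀ α₁ β₀ β₁ γ₀ γ₁ hα₀ hγ₀ h
end
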